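/- arXiv:2110.07648 — 6 statements merged into one kernel-verified Lean document; each statement's English description precedes it below -/
import Mathlib

section
/- Let P be a finite poset that contains neither a copy of Λ nor a copy of V. Then there exists a constant c(P) ∈ ℕ, depending only on P, such that for every n ∈ ℕ, the poset Ramsey number satisfies R(P, Q_n) ≤ n + c(P). -/
/-!
Λ- and V-freeness make comparability transitive, so `P` is a disjoint union of `k` chains, and
ranking each element by the size of its down-set embeds every chain into `C_{m+1}`, `m = |P|`.

Chain lemma, `R(C_{m+1}, Q_n) ≤ n + m`: over each `A ⊆ [n]` stack the staircase
`A ∪ {n, …, n + t - 1}` and stop at the least `t = t(A)` for which no blue chain with `t + 1`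
members lies below it. Then `t` is monotone in `A`, so the stopping sets form a copy of `Q_n`,
and minimality of `t(A)` forces each stopping set to be red (a blue one would extend the chain
found one step lower); `t(A) ≤ m` unless a blue `C_{m+1}` exists.

`Q_{N+k}` contains the `k` pairwise incomparable copies `{Y ∪ {N + i}}` of `Q_N`: either one of
them holds a red `Q_n`, or each holds a blue `C_{m+1}`, which together contain a blue `P`.
Hence `R(P, Q_n) ≤ n + m + k`.
-/

/-- The three-element poset `Λ` with elements `Z1, Z2, Z3` where `Z1 < Z3`, `Z2 < Z3`,
and `Z1`, `Z2` incomparable. (The poset `V` is its order dual `Lamᵒᵈ`.) -/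
inductive Lam : Type where
  | Z1 : Lam
  | Z2 : Lam
  | Z3 : Lam
  deriving DecidableEq

/-- The order relation of `Λ` as a Boolean-valued function. -/
def Lam.ble : Lam → Lam → Bool
  | .Z1, .Z1 => true
  | .Z2, .Z2 => true
  | .Z1, .Z3 => true
  | .Z2, .Z3 => true
  | .Z3, .Z3 => true
  | _, _ => false

instance : PartialOrder Lam where
  le a b := Lam.ble a b = true
  le_refl a := by cases a <;> rfl
  le_trans a b c hab hbc := by
    cases a <;> cases b <;> cases c <;> simp_all [Lam.ble]
  le_antisymm a b hab hba := by
    cases a <;> cases b <;> simp_all [Lam.ble]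

/-- `P'` contains a copy of `P`: there is an injective map `f : P → P'` such that
`x ≤ y` iff `f x ≤ f y`. -/
def ContainsCopy (P P' : Type*) [PartialOrder P] [PartialOrder P'] : Prop :=
  ∃ f : P → P', Function.Injective f ∧ ∀ x y : P, x ≤ y ↔ f x ≤ f y

/-- The blue/red colored Boolean lattice `Q_N` (with coloring `c`, blue = `true`,
red = `false`) contains a blue copy of the poset `P`. -/
def HasBlueCopy (P : Type*) [PartialOrder P] {N : ℕ} (c : Finset (Fin N) → Bool) : Prop :=
  ∃ f : P → Finset (Fin N), Function.Injective f ∧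
    (∀ x y : P, x ≤ y ↔ f x ⊆ f y) ∧ ∀ x : P, c (f x) = true

/-- The blue/red colored Boolean lattice `Q_N` contains a red copy of
the Boolean lattice `Q_n`. -/
def HasRedCube (n : ℕ) {N : ℕ} (c : Finset (Fin N) → Bool) : Prop :=
  ∃ f : Finset (Fin n) → Finset (Fin N), Function.Injective f ∧
    (∀ A B : Finset (Fin n), A ⊆ B ↔ f A ⊆ f B) ∧ ∀ A : Finset (Fin n), c (f A) = false

/-- The poset Ramsey number `R(P, Q_n)`: the least `N` such that every blue/red coloring
of `Q_N` contains a blue copy of `P` or a red copy of `Q_n`. -/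
noncomputable def posetRamsey (P : Type*) [PartialOrder P] (n : ℕ) : ℕ :=
  sInf {N : ℕ | ∀ c : Finset (Fin N) → Bool, HasBlueCopy P c ∨ HasRedCube n c}


open Finset Relation

section Copies

variable {P P' : Type*} [PartialOrder P] [PartialOrder P'] {N : ℕ} {c : Finset (Fin N) → Bool}

lemma containsCopy_iff : ContainsCopy P P' ↔ Nonempty (P ↪o P') :=
  ⟨fun ⟨f, _, hf⟩ => ⟨OrderEmbedding.ofMapLEIff f fun x y => (hf x y).symm⟩,
    fun ⟨f⟩ => ⟨f, f.injective, fun _ _ => f.le_iff_le.symm⟩⟩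

lemma hasBlueCopy_iff : HasBlueCopy P c ↔ ∃ f : P ↪o Finset (Fin N), ∀ x, c (f x) = true :=
  ⟨fun ⟨f, _, hf, hc⟩ => ⟨OrderEmbedding.ofMapLEIff f fun x y => (hf x y).symm, hc⟩,
    fun ⟨f, hc⟩ => ⟨f, f.injective, fun _ _ => f.le_iff_le.symm, hc⟩⟩

lemma hasRedCube_iff {n : ℕ} :
    HasRedCube n c ↔ ∃ f : Finset (Fin n) ↪o Finset (Fin N), ∀ A, c (f A) = false :=
  ⟨fun ⟨f, _, hf, hc⟩ => ⟨OrderEmbedding.ofMapLEIff f fun x y => (hf x y).symm, hc⟩,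
    fun ⟨f, hc⟩ => ⟨f, f.injective, fun _ _ => f.le_iff_le.symm, hc⟩⟩

lemma HasBlueCopy.of_containsCopy (h : HasBlueCopy P' c) (hP : ContainsCopy P P') :
    HasBlueCopy P c := by
  obtain ⟨e⟩ := containsCopy_iff.1 hP
  obtain ⟨f, hf⟩ := hasBlueCopy_iff.1 h
  exact hasBlueCopy_iff.2 ⟨e.trans f, fun x => hf (e x)⟩

end Copies

def RamseyArrow (P : Type*) [PartialOrder P] (n N : ℕ) : Prop :=
  ∀ c : Finset (Fin N) → Bool, HasBlueCopy P c ∨ HasRedCube n c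

lemma posetRamsey_le {P : Type*} [PartialOrder P] {n N : ℕ} (h : RamseyArrow P n N) :
    posetRamsey P n ≤ N :=
  Nat.sInf_le h

lemma RamseyArrow.of_containsCopy {P P' : Type*} [PartialOrder P] [PartialOrder P'] {n N : ℕ}
    (h : RamseyArrow P' n N) (hP : ContainsCopy P P') : RamseyArrow P n N :=
  fun c => (h c).imp_left (·.of_containsCopy hP)

def finsetAppend (n m : ℕ) : Finset (Fin n) × Finset (Fin m) ↪o Finset (Fin (n + m)) :=
  Finset.sumEquiv.symm.toOrderEmbedding.trans (Finset.mapEmbedding finSumFinEquiv.toEmbedding)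

section Chain

variable {N : ℕ} {c : Finset (Fin N) → Bool} {S T : Finset (Fin N)} {t : ℕ}

/-- `t` counts steps, so the chain has `t + 1` members. -/
def HasBlueChainBelow (c : Finset (Fin N) → Bool) (S : Finset (Fin N)) (t : ℕ) : Prop :=
  ∃ p : LTSeries (Finset (Fin N)), p.length = t ∧ ∀ X ∈ p, X ⊆ S ∧ c X = true

lemma HasBlueChainBelow.mono (h : HasBlueChainBelow c S t) (hST : S ⊆ T) :
    HasBlueChainBelow c T t :=
  let ⟨p, hp, hX⟩ := h
  ⟨p, hp, fun X hXp => ⟨(hX X hXp).1.trans hST, (hX X hXp).2⟩⟩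

lemma hasBlueChainBelow_zero (hS : c S = true) : HasBlueChainBelow c S 0 :=
  ⟨RelSeries.singleton _ S, rfl, fun X hX => by
    obtain ⟨i, rfl⟩ := RelSeries.mem_def.1 hX
    exact ⟨subset_rfl, hS⟩⟩

lemma HasBlueChainBelow.snoc (h : HasBlueChainBelow c T t) (hTS : T ⊂ S) (hS : c S = true) :
    HasBlueChainBelow c S (t + 1) := by
  obtain ⟨p, rfl, hX⟩ := h
  have hlast : p.last < S := lt_of_le_of_lt (hX _ p.last_mem).1 hTS
  refine ⟨p.snoc S hlast, rfl, fun X hXp => ?_⟩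
  rcases RelSeries.mem_snoc.1 hXp with hXp | rfl
  · exact ⟨(hX X hXp).1.trans hTS.subset, (hX X hXp).2⟩
  · exact ⟨subset_rfl, hS⟩

lemma HasBlueChainBelow.hasBlueCopy (h : HasBlueChainBelow c S t) :
    HasBlueCopy (Fin (t + 1)) c := by
  obtain ⟨p, rfl, hX⟩ := h
  exact hasBlueCopy_iff.2
    ⟨OrderEmbedding.ofStrictMono p p.strictMono, fun i => (hX _ (p.mem_def.2 ⟨i, rfl⟩)).2⟩

end Chain

def initSeg (m t : ℕ) : Finset (Fin m) := univ.filter fun j => (j : ℕ) < t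

lemma initSeg_mono (m : ℕ) : Monotone (initSeg m) :=
  fun _ _ hst _ => by simp only [initSeg, mem_filter, mem_univ, true_and]; omega

lemma initSeg_ssubset_succ {m s : ℕ} (hs : s < m) : initSeg m s ⊂ initSeg m (s + 1) :=
  ssubset_iff_of_subset (initSeg_mono m s.le_succ) |>.2
    ⟨⟨s, hs⟩, by simp [initSeg], by simp [initSeg]⟩

def staircase {n : ℕ} (m : ℕ) (A : Finset (Fin n)) (t : ℕ) : Finset (Fin (n + m)) :=
  finsetAppend n m (A, initSeg m t)

lemma staircase_subset_staircase_iff {n m : ℕ} {A B : Finset (Fin n)} {s t : ℕ} :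
    staircase m A s ⊆ staircase m B t ↔ A ⊆ B ∧ initSeg m s ⊆ initSeg m t :=
  (finsetAppend n m).le_iff_le.trans Prod.mk_le_mk

theorem ramseyArrow_chain (n m : ℕ) : RamseyArrow (Fin (m + 1)) n (n + m) := by
  intro c
  refine or_iff_not_imp_left.2 fun noBlueChain => ?_
  have stops : ∀ A : Finset (Fin n), ∃ t, ¬ HasBlueChainBelow c (staircase m A t) t :=
    fun A => ⟨m, fun h => noBlueChain h.hasBlueCopy⟩
  classical
  let height A := Nat.find (stops A)
  have height_le : ∀ A, height A ≤ m := fun A =>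
    Nat.find_min' _ fun h => noBlueChain h.hasBlueCopy
  have height_mono : Monotone height := fun A B hAB =>
    Nat.find_min' _ fun h => Nat.find_spec (stops B)
      (h.mono (staircase_subset_staircase_iff.2 ⟨hAB, subset_rfl⟩))
  have red : ∀ A, c (staircase m A (height A)) = false := by
    intro A
    by_contra hblue
    rw [Bool.not_eq_false] at hblue
    suffices HasBlueChainBelow c (staircase m A (height A)) (height A) from
      Nat.find_spec (stops A) this
    rcases hA : height A with _ | s
    · exact hasBlueChainBelow_zero (hA ▸ hblue)
    · have hchain := not_not.1 (Nat.find_min (stops A) (s.lt_succ_self.trans_eq hA.symm))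
      refine hchain.snoc ?_ (hA ▸ hblue)
      exact (finsetAppend n m).lt_iff_lt.2
        (Prod.mk_lt_mk_iff_right.2 (initSeg_ssubset_succ (by have := height_le A; omega)))
  refine hasRedCube_iff.2 ⟨OrderEmbedding.ofMapLEIff (fun A => staircase m A (height A))
    fun A B => ?_, red⟩
  exact staircase_subset_staircase_iff.trans
    ⟨And.left, fun hAB => ⟨hAB, initSeg_mono m (height_mono hAB)⟩⟩

theorem RamseyArrow.sigma {n N k : ℕ} {P : Fin k → Type*} [∀ i, PartialOrder (P i)]
    (h : ∀ i, RamseyArrow (P i) n N) : RamseyArrow (Σ i, P i) n (N + k) := by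
  intro c
  -- the `i`-th subcube `{Y ∪ {N + i}}` of `Q_{N+k}`; distinct subcubes are mutually incomparable
  let subcube (i : Fin k) : Finset (Fin N) ↪o Finset (Fin (N + k)) :=
    OrderEmbedding.ofMapLEIff (fun Y => finsetAppend N k (Y, {i}))
      fun Y Z => (finsetAppend N k).le_iff_le.trans (by simp)
  by_cases hred : ∃ i, HasRedCube n (c ∘ subcube i)
  · obtain ⟨i, hi⟩ := hred
    obtain ⟨f, hf⟩ := hasRedCube_iff.1 hi
    exact Or.inr (hasRedCube_iff.2 ⟨f.trans (subcube i), hf⟩)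
  simp only [not_exists] at hred
  choose f hf using fun i => hasBlueCopy_iff.1 ((h i (c ∘ subcube i)).resolve_right (hred i))
  refine Or.inl (hasBlueCopy_iff.2 ⟨OrderEmbedding.ofMapLEIff
    (fun x => finsetAppend N k (f x.1 x.2, {x.1})) ?_, fun x => hf x.1 x.2⟩)
  rintro ⟨i, a⟩ ⟨j, b⟩
  rw [(finsetAppend N k).le_iff_le, Prod.mk_le_mk, singleton_subset_singleton]
  by_cases hij : i = j
  · subst hij
    simp [Sigma.mk_le_mk_iff]
  · simp [hij, Sigma.le_def]

section LamFree

variable {P : Type*} [PartialOrder P]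

lemma Lam.le_iff_ble {a b : Lam} : a ≤ b ↔ Lam.ble a b = true := Iff.rfl

lemma symmGen_of_le_of_le (hP : ¬ ContainsCopy Lam P) {x y z : P} (hxz : x ≤ z) (hyz : y ≤ z) :
    SymmGen (· ≤ ·) x y := by
  by_contra hxy
  obtain ⟨hnxy, hnyx⟩ : ¬ x ≤ y ∧ ¬ y ≤ x := not_or.1 hxy
  have hnzx : ¬ z ≤ x := fun h => hnyx (hyz.trans h)
  have hnzy : ¬ z ≤ y := fun h => hnxy (hxz.trans h)
  let f : Lam → P := fun | .Z1 => x | .Z2 => y | .Z3 => z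
  refine hP (containsCopy_iff.2 ⟨OrderEmbedding.ofMapLEIff f fun a b => ?_⟩)
  cases a <;> cases b <;> simp [f, Lam.le_iff_ble, Lam.ble, *]

lemma not_containsCopy_lam_dual (hP : ¬ ContainsCopy Lamᵒᵈ P) : ¬ ContainsCopy Lam Pᵒᵈ :=
  fun h => hP (containsCopy_iff.2 ⟨(containsCopy_iff.1 h).some.dual⟩)

lemma symmGen_trans (h1 : ¬ ContainsCopy Lam P) (h2 : ¬ ContainsCopy Lamᵒᵈ P) {x y z : P}
    (hxy : SymmGen (· ≤ ·) x y) (hyz : SymmGen (· ≤ ·) y z) : SymmGen (· ≤ ·) x z := by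
  rcases hxy with hxy | hyx <;> rcases hyz with hyz | hzy
  · exact .of_rel (hxy.trans hyz)
  · exact symmGen_of_le_of_le h1 hxy hzy
  · exact (symmGen_of_le_of_le (P := Pᵒᵈ) (not_containsCopy_lam_dual h2) hyx hyz).symm
  · exact .of_rel_symm (hzy.trans hyx)

end LamFree

lemma exists_strictMono_fin_card_succ (P : Type*) [PartialOrder P] [Finite P] :
    ∃ r : P → Fin (Nat.card P + 1), StrictMono r :=
  ⟨fun x => ⟨(Set.Iic x).ncard, Nat.lt_succ_of_le (Set.ncard_le_card _)⟩,
    fun _ _ hxy => Fin.mk_lt_mk.2 (Set.ncard_lt_ncard (Set.Iic_ssubset_Iic.2 hxy))⟩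

lemma Setoid.exists_fin_eq_iff {α : Type*} [Finite α] (s : Setoid α) :
    ∃ (k : ℕ) (cl : α → Fin k), ∀ x y, cl x = cl y ↔ s x y :=
  ⟨_, Finite.equivFin (Quotient s) ∘ Quotient.mk s,
    fun _ _ => (Finite.equivFin _).injective.eq_iff.trans Quotient.eq⟩

lemma containsCopy_sigma_of_strictMono {P ι α : Type*} [PartialOrder P] [PartialOrder α]
    (cl : P → ι) (r : P → α) (hcl : ∀ x y, cl x = cl y ↔ SymmGen (· ≤ ·) x y)
    (hr : StrictMono r) : ContainsCopy P (Σ _ : ι, α) := by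
  refine containsCopy_iff.2 ⟨OrderEmbedding.ofMapLEIff (fun x => ⟨cl x, r x⟩) fun x y => ?_⟩
  by_cases hxy : cl x = cl y
  · simp only [Sigma.le_def, hxy, exists_true_left]
    refine ⟨fun h => ?_, fun h => hr.monotone h⟩
    rcases (hcl x y).1 hxy with hle | hge
    · exact hle
    · exact hge.eq_or_lt.elim (fun h' => h'.ge) fun h' => absurd h (hr h').not_ge
  · exact iff_of_false (fun h => hxy (Sigma.le_def.1 h).1) fun h => hxy ((hcl x y).2 (.of_rel h))

theorem exists_containsCopy_sigma_fin {P : Type*} [PartialOrder P] [Finite P]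
    (h1 : ¬ ContainsCopy Lam P) (h2 : ¬ ContainsCopy Lamᵒᵈ P) :
    ∃ k m : ℕ, ContainsCopy P (Σ _ : Fin k, Fin (m + 1)) := by
  let comparable : Setoid P :=
    ⟨SymmGen (· ≤ ·), ⟨fun _ => .rfl, .symm, symmGen_trans h1 h2⟩⟩
  obtain ⟨k, cl, hcl⟩ := comparable.exists_fin_eq_iff
  obtain ⟨r, hr⟩ := exists_strictMono_fin_card_succ P
  exact ⟨k, _, containsCopy_sigma_of_strictMono cl r hcl hr⟩

/-- If a finite poset `P` contains neither a copy of `Λ` nor a copy of `V`,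
then there is a constant `c(P)` such that `R(P, Q_n) ≤ n + c(P)` for every `n`. -/
theorem statement1 (P : Type*) [PartialOrder P] [Finite P]
    (h1 : ¬ ContainsCopy Lam P) (h2 : ¬ ContainsCopy Lamᵒᵈ P) :
    ∃ cP : ℕ, ∀ n : ℕ, posetRamsey P n ≤ n + cP := by
  obtain ⟨k, m, hP⟩ := exists_containsCopy_sigma_fin h1 h2
  refine ⟨m + k, fun n => posetRamsey_le ?_⟩
  rw [← add_assoc]
  exact (RamseyArrow.sigma fun _ => ramseyArrow_chain n m).of_containsCopy hP
end

section
/- Let X and Y be disjoint finite sets with |X| = n and |Y| = k, and let Q = Q(X∪Y) be a blue/red colored Boolean lattice. Fix a linear ordering π = (y_1, ..., y_k) of Y and set Y(0) = ∅ and Y(i) = {y_1, ..., y_i} for i ∈ [k]. Then there exists at least one of the following in Q: (a) a red X-good copy of Q(X), or (b) a blue chain with k+1 elements of the form X_0 ∪ Y(0) ⊆ X_1 ∪ Y(1) ⊆ ... ⊆ X_k ∪ Y(k) where X_0 ⊆ X_1 ⊆ ... ⊆ X_k ⊆ X. -/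
/-- With blue/red coloring `c` (blue = `true`, red = `false`) of the Boolean lattice on a
ground set partitioned into `X ∪ Y`, there is a red `X`-good copy of `Q(X)`: an embedding
`φ` of `Q(X)` with all images red and `φ(A) ∩ X = A` for all `A ⊆ X`. -/
def RedXGoodCopy {V : Type*} [DecidableEq V] (c : Finset V → Bool) (X : Finset V) : Prop :=
  ∃ φ : Finset V → Finset V,
    (∀ A B : Finset V, A ⊆ X → B ⊆ X → (A ⊆ B ↔ φ A ⊆ φ B)) ∧
    (∀ A : Finset V, A ⊆ X → φ A ∩ X = A) ∧
    (∀ A : Finset V, A ⊆ X → c (φ A) = false)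

/-- `S` is an ordered subset of `Y`: a sequence of distinct elements of `Y`
(a vertex of the factorial tree `O(Y)`, ordered by the prefix relation `<+:`). -/
def OrdSubset {V : Type*} (Y : Finset V) (S : List V) : Prop :=
  S.Nodup ∧ ∀ v ∈ S, v ∈ Y

/-- `τ` is a `Y`-good embedding of the factorial tree `O(Y)` into the Boolean lattice:
for ordered subsets `S, T` of `Y`, `S` is a prefix of `T` iff `τ S ⊆ τ T`, and
`τ S ∩ Y` is the underlying set of `S`. Its image is a `Y`-shrub. -/
def IsShrubMap {V : Type*} [DecidableEq V] (Y : Finset V) (τ : List V → Finset V) : Prop :=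
  (∀ S T : List V, OrdSubset Y S → OrdSubset Y T → (S <+: T ↔ τ S ⊆ τ T)) ∧
  (∀ S : List V, OrdSubset Y S → τ S ∩ Y = S.toFinset)

/-- `τ` determines a weak `Y`-shrub: `τ S ∩ Y` is the underlying set of `S` for every
ordered subset `S` of `Y`, and `τ S ⊊ τ T` whenever `S` is a strict prefix of `T`. -/
def IsWeakShrubMap {V : Type*} [DecidableEq V] (Y : Finset V) (τ : List V → Finset V) : Prop :=
  (∀ S T : List V, OrdSubset Y S → OrdSubset Y T → S <+: T → S ≠ T → τ S ⊂ τ T) ∧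
  (∀ S : List V, OrdSubset Y S → τ S ∩ Y = S.toFinset)

/-- There is a monochromatic blue `Y`-shrub (blue = `true`). -/
def BlueYShrub {V : Type*} [DecidableEq V] (c : Finset V → Bool) (Y : Finset V) : Prop :=
  ∃ τ : List V → Finset V, IsShrubMap Y τ ∧ ∀ S : List V, OrdSubset Y S → c (τ S) = true

/-- The coloring `c` admits no blue copy of the poset `Λ`: there are no blue vertices
`A, B, C` with `A ⊂ C`, `B ⊂ C` and `A`, `B` incomparable. -/
def NoBlueLambda {V : Type*} (c : Finset V → Bool) : Prop :=
  ¬ ∃ A B C : Finset V, c A = true ∧ c B = true ∧ c C = true ∧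
      A ⊂ C ∧ B ⊂ C ∧ ¬ A ⊆ B ∧ ¬ B ⊆ A

/-- For disjoint sets `X`, `Y` with `|X| = n`, `|Y| = k`, a blue/red colored
Boolean lattice `Q(X ∪ Y)` and a linear ordering `π = (y_1, …, y_k)` of `Y`, there is a red
`X`-good copy of `Q(X)`, or a blue chain with `k+1` elements of the form
`X_0 ∪ Y(0) ⊆ X_1 ∪ Y(1) ⊆ … ⊆ X_k ∪ Y(k)` with `X_0 ⊆ X_1 ⊆ … ⊆ X_k ⊆ X`,
where `Y(i) = {y_1, …, y_i}`. -/
theorem statement9 {V : Type*} [DecidableEq V] [Fintype V]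
    (X Y : Finset V) (hd : Disjoint X Y) (hc : X ∪ Y = Finset.univ)
    (n k : ℕ) (hX : X.card = n) (hY : Y.card = k)
    (c : Finset V → Bool)
    (π : Fin k → V) (hπinj : Function.Injective π)
    (hπY : Finset.image π Finset.univ = Y) :
    RedXGoodCopy c X ∨
      ∃ Xs : ℕ → Finset V,
        (∀ i : ℕ, i ≤ k → Xs i ⊆ X) ∧
        (∀ i j : ℕ, i ≤ j → j ≤ k → Xs i ⊆ Xs j) ∧
        (∀ i : ℕ, i ≤ k →
          c (Xs i ∪ Finset.image π (Finset.univ.filter (fun j : Fin k => (j : ℕ) < i)))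
            = true) := by
  classical
  set Yset : ℕ → Finset V := fun i =>
    Finset.image π (Finset.univ.filter (fun j : Fin k => (j : ℕ) < i)) with hYsetdef
  set Good : Finset V → ℕ → Prop := fun A t => ∃ Xs : ℕ → Finset V,
    (∀ j, j < t → Xs j ⊆ A) ∧ (∀ i j, i ≤ j → j < t → Xs i ⊆ Xs j) ∧
    (∀ j, j < t → c (Xs j ∪ Yset j) = true) with hGooddef
  by_cases hbig : Good X (k + 1)
  · right
    obtain ⟨Xs, h1, h2, h3⟩ := hbig
    exact ⟨Xs, fun i hi => h1 i (Nat.lt_succ_of_le hi),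
      fun i j hij hj => h2 i j hij (Nat.lt_succ_of_le hj),
      fun i hi => h3 i (Nat.lt_succ_of_le hi)⟩
  · left
    have hGood0 : ∀ A : Finset V, Good A 0 := by
      intro A
      exact ⟨fun _ => ∅, by omega, by omega, by omega⟩
    set f : Finset V → ℕ := fun A => Nat.findGreatest (Good A) (k + 1) with hfdef
    have hfspec : ∀ A : Finset V, Good A (f A) := fun A =>
      Nat.findGreatest_spec (Nat.zero_le _) (hGood0 A)
    have hfle : ∀ A : Finset V, A ⊆ X → f A ≤ k := by
      intro A hA
      by_contra h
      push_neg at h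
      have hfa : f A = k + 1 := le_antisymm (Nat.findGreatest_le _) h
      apply hbig
      obtain ⟨Xs, h1, h2, h3⟩ := hfspec A
      rw [hfa] at h1 h2 h3
      exact ⟨Xs, fun j hj => (h1 j hj).trans hA, h2, h3⟩
    have hmono : ∀ A B : Finset V, A ⊆ B → f A ≤ f B := by
      intro A B hAB
      apply Nat.le_findGreatest (Nat.findGreatest_le _)
      obtain ⟨Xs, h1, h2, h3⟩ := hfspec A
      exact ⟨Xs, fun j hj => (h1 j hj).trans hAB, h2, h3⟩
    have hYmono : ∀ i j : ℕ, i ≤ j → Yset i ⊆ Yset j := by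
      intro i j hij
      apply Finset.image_subset_image
      intro x hx
      simp only [Finset.mem_filter] at hx ⊢
      exact ⟨hx.1, lt_of_lt_of_le hx.2 hij⟩
    have hYsub : ∀ i : ℕ, Yset i ⊆ Y := by
      intro i x hx
      simp only [hYsetdef, Finset.mem_image] at hx
      obtain ⟨j, _, rfl⟩ := hx
      rw [← hπY]
      exact Finset.mem_image_of_mem _ (Finset.mem_univ _)
    have hred : ∀ A : Finset V, A ⊆ X → c (A ∪ Yset (f A)) = false := by
      intro A hA
      rw [Bool.eq_false_iff]
      intro hblue
      have hnext : Good A (f A + 1) := by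
        obtain ⟨Xs, h1, h2, h3⟩ := hfspec A
        refine ⟨fun j => if j < f A then Xs j else A, ?_, ?_, ?_⟩
        · intro j hj
          by_cases hjf : j < f A
          · simpa [hjf] using h1 j hjf
          · simp [hjf]
        · intro i j hij hj
          by_cases hjf : j < f A
          · have hif : i < f A := lt_of_le_of_lt hij hjf
            simpa [hjf, hif] using h2 i j hij hjf
          · by_cases hif : i < f A
            · simpa [hjf, hif] using h1 i hif
            · simp [hjf, hif]
        · intro j hj
          by_cases hjf : j < f A
          · simpa [hjf] using h3 j hjf
          · have hje : j = f A := by omega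
            simpa [hjf, hje] using hblue
      exact Nat.findGreatest_is_greatest (Nat.lt_succ_self _)
        (Nat.succ_le_succ (hfle A hA)) hnext
    have hinter : ∀ A : Finset V, A ⊆ X → (A ∪ Yset (f A)) ∩ X = A := by
      intro A hA
      rw [Finset.union_inter_distrib_right, Finset.inter_eq_left.mpr hA,
        Finset.disjoint_iff_inter_eq_empty.mp (Disjoint.mono_left (hYsub _) hd.symm),
        Finset.union_empty]
    refine ⟨fun A => A ∪ Yset (f A), ?_, hinter, hred⟩
    intro A B hA hB
    constructor
    · intro hAB
      exact Finset.union_subset_union hAB (hYmono _ _ (hmono A B hAB))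
    · intro hsub
      calc A = (A ∪ Yset (f A)) ∩ X := (hinter A hA).symm
        _ ⊆ (B ∪ Yset (f B)) ∩ X := Finset.inter_subset_inter hsub le_rfl
        _ = B := hinter B hB
end

section
/- Let X and Y be disjoint finite sets with |X| = n and |Y| = k. Let P be a subposet of the Boolean lattice Q = Q(X∪Y) such that P contains no chain with k+1 elements. Then there exists a copy of Q_n in Q which contains no vertex of P. -/
/-!
Order `Y` as `y₀, …, y_{k-1}`; then `(A, i) ↦ A ∪ {y_j | j < i}` embeds the grid
`Q_n × {0, …, k}` into `Q(X ∪ Y)`, so it suffices to find a monotone height `g : Q_n → {0, …, k}`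
whose graph avoids `P`. Take `g A` to be the largest `m ≤ k` such that `P` contains an `m`-chain
inside the box `↓A × [0, m)`. If `(A, g A)` were in `P`, it would lie above that whole chain and
extend it: past `g A` if `g A < k`, and to a forbidden `(k + 1)`-chain if `g A = k`.
-/

def OrderEmbedding.prodMap {α β γ δ : Type*}
    [Preorder α] [Preorder β] [Preorder γ] [Preorder δ] (f : α ↪o β) (g : γ ↪o δ) :
    α × γ ↪o β × δ where
  toEmbedding := f.toEmbedding.prodMap g.toEmbedding
  map_rel_iff' := by simp [Prod.le_def]

def Fin.initialSegment (k : ℕ) : Fin (k + 1) ↪o Finset (Fin k) :=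
  OrderEmbedding.ofStrictMono (fun i => ({j : Fin k | j.castSucc < i} : Finset (Fin k))) <| by
    intro i i' hii'
    refine (Finset.ssubset_iff_of_subset fun j hj => ?_).2
      ⟨i.castPred (Fin.ne_last_of_lt hii'), ?_⟩
    · simp only [Finset.mem_filter, Finset.mem_univ, true_and] at hj ⊢
      exact hj.trans hii'
    · simp [hii']

section Grid

variable {α : Type*} [Preorder α] {k : ℕ}

def HasChainBelow (S : Set (α × Fin (k + 1))) (a : α) (m : ℕ) : Prop :=
  ∃ C : Finset (α × Fin (k + 1)), ↑C ⊆ S ∧ IsChain (· ≤ ·) (C : Set (α × Fin (k + 1))) ∧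
    C.card = m ∧ ∀ p ∈ C, p.1 ≤ a ∧ (p.2 : ℕ) < m

variable {S : Set (α × Fin (k + 1))}

theorem hasChainBelow_zero (a : α) : HasChainBelow S a 0 :=
  ⟨∅, by simp, by simp, rfl, by simp⟩

theorem HasChainBelow.mono {a b : α} {m : ℕ} (h : HasChainBelow S a m) (hab : a ≤ b) :
    HasChainBelow S b m := by
  obtain ⟨C, hCS, hC, hcard, hle⟩ := h
  exact ⟨C, hCS, hC, hcard, fun p hp => ⟨(hle p hp).1.trans hab, (hle p hp).2⟩⟩

theorem HasChainBelow.succ {a : α} {i : Fin (k + 1)} (h : HasChainBelow S a i)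
    (hi : (a, i) ∈ S) : HasChainBelow S a (i + 1) := by
  classical
  obtain ⟨C, hCS, hC, hcard, hle⟩ := h
  have hbelow : ∀ p ∈ C, p ≤ (a, i) := fun p hp =>
    ⟨(hle p hp).1, Fin.le_iff_val_le_val.2 (hle p hp).2.le⟩
  have hnotMem : (a, i) ∉ C := fun hmem => (hle _ hmem).2.false
  refine ⟨insert (a, i) C, ?_, ?_, ?_, ?_⟩
  · rw [Finset.coe_insert]
    exact Set.insert_subset_iff.2 ⟨hi, hCS⟩
  · rw [Finset.coe_insert]
    exact hC.insert fun p hp _ => Or.inr (hbelow p hp)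
  · rw [Finset.card_insert_of_notMem hnotMem, hcard]
  · simp only [Finset.mem_insert, forall_eq_or_imp]
    exact ⟨⟨le_rfl, Nat.lt_succ_self _⟩,
      fun p hp => ⟨(hle p hp).1, (hle p hp).2.trans (Nat.lt_succ_self _)⟩⟩

theorem exists_monotone_forall_notMem
    (hS : ¬ ∃ C : Finset (α × Fin (k + 1)), ↑C ⊆ S ∧ C.card = k + 1 ∧
      IsChain (· ≤ ·) (C : Set (α × Fin (k + 1)))) :
    ∃ g : α → Fin (k + 1), Monotone g ∧ ∀ a, (a, g a) ∉ S := by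
  classical
  let g : α → Fin (k + 1) := fun a =>
    ⟨Nat.findGreatest (HasChainBelow S a) k, Nat.lt_succ_of_le (Nat.findGreatest_le k)⟩
  refine ⟨g, fun a b hab => Nat.findGreatest_mono (fun m h => h.mono hab) le_rfl, fun a ha => ?_⟩
  have hmax : HasChainBelow S a (g a) :=
    Nat.findGreatest_spec (Nat.zero_le k) (hasChainBelow_zero a)
  rcases (Nat.findGreatest_le (P := HasChainBelow S a) k).lt_or_eq with hlt | heq
  · exact Nat.findGreatest_is_greatest (Nat.lt_succ_self _) hlt (hmax.succ ha)
  · obtain ⟨C, hCS, hC, hcard, -⟩ := hmax.succ ha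
    exact hS ⟨C, hCS, hcard.trans (congrArg (· + 1) heq), hC⟩

end Grid

theorem exists_orderEmbedding_forall_notMem {α β : Type*} [PartialOrder α] [Preorder β] {k : ℕ}
    (e : α × Fin (k + 1) ↪o β) (P : Set β)
    (hP : ¬ ∃ C : Finset β, ↑C ⊆ P ∧ C.card = k + 1 ∧ IsChain (· ≤ ·) (C : Set β)) :
    ∃ f : α ↪o β, ∀ a, f a ∉ P := by
  obtain ⟨g, hg, hgP⟩ :=
    exists_monotone_forall_notMem (S := e ⁻¹' P) fun ⟨C, hCP, hcard, hC⟩ =>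
      hP ⟨C.map e.toEmbedding, by simpa using Set.image_subset_iff.2 hCP,
        (C.card_map _).trans hcard, by simpa using hC.image e⟩
  refine ⟨OrderEmbedding.ofMapLEIff (fun a => e (a, g a)) fun a b => ?_, fun a => hgP a⟩
  rw [e.le_iff_le]
  exact ⟨fun h => h.1, fun h => ⟨h, hg h⟩⟩

theorem statement10_general {V : Type*}
    (X Y : Finset V) (hd : Disjoint X Y)
    (n k : ℕ) (hX : X.card = n) (hY : Y.card = k)
    (P : Set (Finset V))
    (hP : ¬ ∃ C : Finset (Finset V),
        ↑C ⊆ P ∧ C.card = k + 1 ∧ IsChain (· ⊆ ·) (C : Set (Finset V))) :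
    ∃ f : Finset (Fin n) → Finset V,
      Function.Injective f ∧
      (∀ A B : Finset (Fin n), A ⊆ B ↔ f A ⊆ f B) ∧
      ∀ A : Finset (Fin n), f A ∉ P := by
  let w : Fin n ⊕ Fin k ↪ V :=
    (Equiv.sumCongr (X.equivFinOfCardEq hX).symm (Y.equivFinOfCardEq hY).symm).toEmbedding.trans
      (Function.Embedding.sumSet (Finset.disjoint_coe.2 hd))
  let e : Finset (Fin n) × Fin (k + 1) ↪o Finset V :=
    ((OrderIso.refl _).toOrderEmbedding.prodMap (Fin.initialSegment k)).trans
      (Finset.sumEquiv.symm.toOrderEmbedding.trans (Finset.mapEmbedding w))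
  obtain ⟨f, hf⟩ := exists_orderEmbedding_forall_notMem e P hP
  exact ⟨f, f.injective, fun A B => f.le_iff_le.symm, hf⟩

/-- Let `X`, `Y` be disjoint sets with `|X| = n`, `|Y| = k`, and let `P` be a
subposet of `Q(X ∪ Y)` containing no chain with `k+1` elements. Then there is a copy of
`Q_n` in `Q(X ∪ Y)` containing no vertex of `P`. -/
theorem statement10 {V : Type*} [DecidableEq V] [Fintype V]
    (X Y : Finset V) (hd : Disjoint X Y) (hc : X ∪ Y = Finset.univ)
    (n k : ℕ) (hX : X.card = n) (hY : Y.card = k)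
    (P : Set (Finset V))
    (hP : ¬ ∃ C : Finset (Finset V),
        ↑C ⊆ P ∧ C.card = k + 1 ∧ IsChain (· ⊆ ·) (C : Set (Finset V))) :
    ∃ f : Finset (Fin n) → Finset V,
      Function.Injective f ∧
      (∀ A B : Finset (Fin n), A ⊆ B ↔ f A ⊆ f B) ∧
      ∀ A : Finset (Fin n), f A ∉ P :=
  statement10_general X Y hd n k hX hY P hP
end

section
/- Let X and Y be disjoint finite sets and let Q = Q(X∪Y). Let P be a weak Y-shrub in Q such that P contains no copy of Λ. Then P is a Y-shrub. -/
/-!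
Two vertices of `O(Y)` that are not prefix-comparable fork after a common prefix `R` into
children `R s` and `R t` with `s ≠ t`. In a weak `Y`-shrub the images of these children are
incomparable, since their traces on `Y` contain `s` and `t` respectively. So if `τ S ⊆ τ T` for
such `S` and `T`, the images of `R s ≤ S` and `R t ≤ T` lie below `τ T` and form a copy of `Λ`.
-/

theorem List.prefix_or_prefix_or_exists_fork {α : Type*} : ∀ S T : List α,
    S <+: T ∨ T <+: S ∨ ∃ R s t, s ≠ t ∧ R ++ [s] <+: S ∧ R ++ [t] <+: T
  | [], _ => Or.inl nil_prefix
  | _ :: _, [] => Or.inr (Or.inl nil_prefix)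
  | a :: S, b :: T => by
    by_cases hab : a = b
    · subst hab
      rcases prefix_or_prefix_or_exists_fork S T with h | h | ⟨R, s, t, hst, hS, hT⟩
      · exact Or.inl ((prefix_cons_inj a).2 h)
      · exact Or.inr (Or.inl ((prefix_cons_inj a).2 h))
      · exact Or.inr (Or.inr ⟨a :: R, s, t, hst, (prefix_cons_inj a).2 hS,
          (prefix_cons_inj a).2 hT⟩)
    · exact Or.inr (Or.inr ⟨[], a, b, hab, ⟨S, rfl⟩, ⟨T, rfl⟩⟩)

section

variable {V : Type*} {Y : Finset V}

theorem OrdSubset.of_prefix {S T : List V} (hT : OrdSubset Y T) (h : S <+: T) :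
    OrdSubset Y S :=
  ⟨hT.1.sublist h.sublist, fun v hv => hT.2 v (h.sublist.mem hv)⟩

theorem OrdSubset.notMem_of_append_singleton {R : List V} {s : V}
    (h : OrdSubset Y (R ++ [s])) : s ∉ R := by
  intro hs
  simpa using (List.nodup_append.1 h.1).2.2 s hs

end

def shrubImage {V : Type*} (Y : Finset V) (τ : List V → Finset V) : Set (Finset V) :=
  {W | ∃ S : List V, OrdSubset Y S ∧ τ S = W}

def LambdaFree {V : Type*} (P : Set (Finset V)) : Prop :=
  ¬ ∃ A B C : Finset V, A ∈ P ∧ B ∈ P ∧ C ∈ P ∧ A ⊂ C ∧ B ⊂ C ∧ ¬ A ⊆ B ∧ ¬ B ⊆ A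

namespace IsWeakShrubMap

variable {V : Type*} [DecidableEq V] {Y : Finset V} {τ : List V → Finset V}
  (hτ : IsWeakShrubMap Y τ)
include hτ

theorem subset_of_prefix {S T : List V} (hS : OrdSubset Y S) (hT : OrdSubset Y T)
    (h : S <+: T) : τ S ⊆ τ T := by
  rcases eq_or_ne S T with rfl | hne
  · exact subset_rfl
  · exact (hτ.1 S T hS hT h hne).subset

theorem toFinset_subset_of_subset {S T : List V} (hS : OrdSubset Y S) (hT : OrdSubset Y T)
    (h : τ S ⊆ τ T) : S.toFinset ⊆ T.toFinset := by
  rw [← hτ.2 S hS, ← hτ.2 T hT]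
  exact Finset.inter_subset_inter_right h

theorem not_subset_of_fork {R : List V} {s t : V} (hs : OrdSubset Y (R ++ [s]))
    (ht : OrdSubset Y (R ++ [t])) (hst : s ≠ t) : ¬ τ (R ++ [s]) ⊆ τ (R ++ [t]) := by
  intro h
  have hsR : s ∉ R := hs.notMem_of_append_singleton
  have hsRt := hτ.toFinset_subset_of_subset hs ht h (by simp : s ∈ (R ++ [s]).toFinset)
  rw [List.mem_toFinset, List.mem_append, List.mem_singleton] at hsRt
  exact hsRt.elim hsR hst

theorem prefix_of_subset (hΛ : LambdaFree (shrubImage Y τ)) {S T : List V}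
    (hS : OrdSubset Y S) (hT : OrdSubset Y T) (h : τ S ⊆ τ T) : S <+: T := by
  rcases List.prefix_or_prefix_or_exists_fork S T with hST | hTS | ⟨R, s, t, hst, hRs, hRt⟩
  · exact hST
  · rcases eq_or_ne T S with rfl | hne
    · exact List.prefix_rfl
    · exact absurd h (not_subset_of_ssubset (hτ.1 T S hT hS hTS hne))
  · have hs : OrdSubset Y (R ++ [s]) := hS.of_prefix hRs
    have ht : OrdSubset Y (R ++ [t]) := hT.of_prefix hRt
    have hAB := hτ.not_subset_of_fork hs ht hst
    have hBA := hτ.not_subset_of_fork ht hs hst.symm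
    have hAC : τ (R ++ [s]) ⊆ τ T := (hτ.subset_of_prefix hs hS hRs).trans h
    have hBC : τ (R ++ [t]) ⊆ τ T := hτ.subset_of_prefix ht hT hRt
    exfalso
    refine hΛ ⟨_, _, _, ⟨_, hs, rfl⟩, ⟨_, ht, rfl⟩, ⟨_, hT, rfl⟩,
      ssubset_of_subset_of_ne hAC ?_, ssubset_of_subset_of_ne hBC ?_, hAB, hBA⟩
    · intro hAT
      exact hBA (hAT ▸ hBC)
    · intro hBT
      exact hAB (hBT ▸ hAC)

theorem isShrubMap (hΛ : LambdaFree (shrubImage Y τ)) : IsShrubMap Y τ :=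
  ⟨fun _ _ hS hT => ⟨hτ.subset_of_prefix hS hT, hτ.prefix_of_subset hΛ hS hT⟩, hτ.2⟩

end IsWeakShrubMap

theorem statement11_general {V : Type*} [DecidableEq V]
    (Y : Finset V)
    (P : Set (Finset V))
    (τ : List V → Finset V) (hweak : IsWeakShrubMap Y τ)
    (him : P = {W : Finset V | ∃ S : List V, OrdSubset Y S ∧ τ S = W})
    (hΛ : ¬ ∃ A B C : Finset V, A ∈ P ∧ B ∈ P ∧ C ∈ P ∧
        A ⊂ C ∧ B ⊂ C ∧ ¬ A ⊆ B ∧ ¬ B ⊆ A) :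
    ∃ τ' : List V → Finset V, IsShrubMap Y τ' ∧
      P = {W : Finset V | ∃ S : List V, OrdSubset Y S ∧ τ' S = W} := by
  subst him
  exact ⟨τ, hweak.isShrubMap hΛ, rfl⟩

/-- Let `X`, `Y` be disjoint sets and let `P` be a weak `Y`-shrub in
`Q(X ∪ Y)` containing no copy of `Λ`. Then `P` is a `Y`-shrub. -/
theorem statement11 {V : Type*} [DecidableEq V] [Fintype V]
    (X Y : Finset V) (hd : Disjoint X Y) (hc : X ∪ Y = Finset.univ)
    (P : Set (Finset V))
    (τ : List V → Finset V) (hweak : IsWeakShrubMap Y τ)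
    (him : P = {W : Finset V | ∃ S : List V, OrdSubset Y S ∧ τ S = W})
    (hΛ : ¬ ∃ A B C : Finset V, A ∈ P ∧ B ∈ P ∧ C ∈ P ∧
        A ⊂ C ∧ B ⊂ C ∧ ¬ A ⊆ B ∧ ¬ B ⊆ A) :
    ∃ τ' : List V → Finset V, IsShrubMap Y τ' ∧
      P = {W : Finset V | ∃ S : List V, OrdSubset Y S ∧ τ' S = W} :=
  statement11_general Y P τ hweak him hΛ
end

section
/- Let X and Y be disjoint finite sets and let Q = Q(X∪Y) be a blue/red colored Boolean lattice with no blue copy of Λ. Let X0 ⊆ X and Y0 ⊆ Y. Then the vertex (X0, Y0) is embeddable if and only if either (i) (X0, Y0) is blue and there is a Y' ⊆ Y with Y' ⊋ Y0 such that (X0, Y') is embeddable, or (ii) (X0, Y0) is red and for all X' ⊆ X with X' ⊋ X0, the vertex (X', Y0) is embeddable. -/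
/-- For `X0 ⊆ X` and `Y0 ⊆ Y`, the vertex `(X0, Y0) = X0 ∪ Y0` is embeddable: there is a
map `φ` defined on `{X' : X0 ⊆ X' ⊆ X}` into the lattice with `X1 ⊆ X2` iff `φ X1 ⊆ φ X2`,
all images red (`false`), `φ X' ∩ X = X'` for all such `X'`, and `φ X0 ⊇ X0 ∪ Y0`. -/
def Embeddable {V : Type*} [DecidableEq V] (c : Finset V → Bool) (X : Finset V)
    (X0 Y0 : Finset V) : Prop :=
  ∃ φ : Finset V → Finset V,
    (∀ A B : Finset V, X0 ⊆ A → A ⊆ X → X0 ⊆ B → B ⊆ X → (A ⊆ B ↔ φ A ⊆ φ B)) ∧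
    (∀ A : Finset V, X0 ⊆ A → A ⊆ X → c (φ A) = false) ∧
    (∀ A : Finset V, X0 ⊆ A → A ⊆ X → φ A ∩ X = A) ∧
    X0 ∪ Y0 ⊆ φ X0

/-!
Necessity is a restriction argument: an embedding at `(X0, Y0)` is also one at every `(X', Y0)`
with `X' ⊇ X0`, and if `(X0, Y0)` is blue then its red image `φ X0` is a vertex `(X0, Y')` with
`Y' ⊋ Y0`. For sufficiency in the red case, let `B` range over the minimal sets `X0 ⊊ B ⊆ X`
with `(B, Y0)` blue and glue the embeddings `ψ_B` at `(B, Y0)` into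
`φ A = A ∪ Y0 ∪ ⋃_{B ⊆ A} ψ_B A`. If no such `B` lies below `A` then `φ A = (A, Y0)` is red;
if exactly one does then `φ A = ψ_B A` is red; if two do, the two blue vertices `(B, Y0)` are
incomparable and lie below `φ A`, so `φ A` is red because there is no blue `Λ`.
-/

open Finset

theorem NoBlueLambda.eq_false_of_incomparable {V : Type*} {c : Finset V → Bool}
    (hΛ : NoBlueLambda c) {A B C : Finset V} (hA : c A = true) (hB : c B = true)
    (hAB : ¬A ⊆ B) (hBA : ¬B ⊆ A) (hAC : A ⊆ C) (hBC : B ⊆ C) : c C = false := by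
  by_contra hC
  exact hΛ ⟨A, B, C, hA, hB, Bool.not_eq_false _ ▸ hC,
    ssubset_of_subset_of_ne hAC (by rintro rfl; exact hBA hBC),
    ssubset_of_subset_of_ne hBC (by rintro rfl; exact hAB hAC), hAB, hBA⟩

section

variable {V : Type*} [DecidableEq V]

/-- The witness `φ` in the definition of `Embeddable c X X0 Y0`. -/
structure IsRedEmbedding (c : Finset V → Bool) (X X0 Y0 : Finset V)
    (φ : Finset V → Finset V) : Prop where
  subset_iff : ∀ A B, X0 ⊆ A → A ⊆ X → X0 ⊆ B → B ⊆ X → (A ⊆ B ↔ φ A ⊆ φ B)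
  red : ∀ A, X0 ⊆ A → A ⊆ X → c (φ A) = false
  inter_eq : ∀ A, X0 ⊆ A → A ⊆ X → φ A ∩ X = A
  base : X0 ∪ Y0 ⊆ φ X0

theorem embeddable_iff {c : Finset V → Bool} {X X0 Y0 : Finset V} :
    Embeddable c X X0 Y0 ↔ ∃ φ, IsRedEmbedding c X X0 Y0 φ :=
  ⟨fun ⟨φ, h₁, h₂, h₃, h₄⟩ => ⟨φ, h₁, h₂, h₃, h₄⟩,
    fun ⟨φ, h₁, h₂, h₃, h₄⟩ => ⟨φ, h₁, h₂, h₃, h₄⟩⟩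

namespace IsRedEmbedding

variable {c : Finset V → Bool} {X X0 Y0 : Finset V} {φ : Finset V → Finset V}

theorem subset_apply (h : IsRedEmbedding c X X0 Y0 φ) {A : Finset V} (hA : X0 ⊆ A)
    (hAX : A ⊆ X) : A ⊆ φ A :=
  (h.inter_eq A hA hAX).ge.trans inter_subset_left

theorem monotone (h : IsRedEmbedding c X X0 Y0 φ) {A B : Finset V} (hA : X0 ⊆ A) (hAB : A ⊆ B)
    (hBX : B ⊆ X) : φ A ⊆ φ B :=
  (h.subset_iff A B hA (hAB.trans hBX) (hA.trans hAB) hBX).mp hAB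

theorem of_subset_right {Y' : Finset V} (h : IsRedEmbedding c X X0 Y' φ) (hY : Y0 ⊆ Y') :
    IsRedEmbedding c X X0 Y0 φ :=
  ⟨h.subset_iff, h.red, h.inter_eq, (union_subset_union_right hY).trans h.base⟩

theorem restrict (h : IsRedEmbedding c X X0 Y0 φ) {X' : Finset V} (hX0X' : X0 ⊆ X')
    (hX'X : X' ⊆ X) : IsRedEmbedding c X X' Y0 φ where
  subset_iff A B hA hAX hB hBX := h.subset_iff A B (hX0X'.trans hA) hAX (hX0X'.trans hB) hBX
  red A hA := h.red A (hX0X'.trans hA)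
  inter_eq A hA := h.inter_eq A (hX0X'.trans hA)
  base := union_subset (h.subset_apply hX0X' hX'X)
    (subset_union_right.trans (h.base.trans (h.monotone subset_rfl hX0X' hX'X)))

end IsRedEmbedding

namespace Embeddable

variable {c : Finset V → Bool} {X X0 Y0 : Finset V}

theorem of_subset_right {Y' : Finset V} (h : Embeddable c X X0 Y') (hY : Y0 ⊆ Y') :
    Embeddable c X X0 Y0 :=
  let ⟨φ, hφ⟩ := embeddable_iff.mp h
  embeddable_iff.mpr ⟨φ, hφ.of_subset_right hY⟩

theorem restrict (h : Embeddable c X X0 Y0) {X' : Finset V} (hX0X' : X0 ⊆ X') (hX'X : X' ⊆ X) :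
    Embeddable c X X' Y0 :=
  let ⟨φ, hφ⟩ := embeddable_iff.mp h
  embeddable_iff.mpr ⟨φ, hφ.restrict hX0X' hX'X⟩

/-- The red image `φ X0` of an embedding is itself an embeddable vertex `(X0, Y')`. -/
theorem exists_red_superset [Fintype V] {Y : Finset V} (hc : X ∪ Y = univ)
    (h : Embeddable c X X0 Y0) (hX0 : X0 ⊆ X) (hY0 : Y0 ⊆ Y) :
    ∃ Y' ⊆ Y, Y0 ⊆ Y' ∧ c (X0 ∪ Y') = false ∧ Embeddable c X X0 Y' := by
  obtain ⟨φ, hφ⟩ := embeddable_iff.mp h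
  have hX0φ : X0 ⊆ φ X0 := hφ.subset_apply subset_rfl hX0
  have hφX0 : X0 ∪ φ X0 ∩ Y = φ X0 := by
    calc X0 ∪ φ X0 ∩ Y = φ X0 ∩ X ∪ φ X0 ∩ Y := by rw [hφ.inter_eq X0 subset_rfl hX0]
      _ = φ X0 := by rw [← inter_union_distrib_left, hc, inter_univ]
  refine ⟨φ X0 ∩ Y, inter_subset_right, subset_inter (subset_union_right.trans hφ.base) hY0,
    hφX0.symm ▸ hφ.red X0 subset_rfl hX0, embeddable_iff.mpr ⟨φ, ?_⟩⟩
  exact ⟨hφ.subset_iff, hφ.red, hφ.inter_eq, union_subset hX0φ inter_subset_left⟩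

end Embeddable

section Gluing

variable (c : Finset V → Bool) (X X0 Y0 : Finset V)

def BlueAbove (B : Finset V) : Prop :=
  X0 ⊂ B ∧ B ⊆ X ∧ c (B ∪ Y0) = true

open Classical in
noncomputable def glue (ψ : Finset V → Finset V → Finset V) (A : Finset V) : Finset V :=
  A ∪ Y0 ∪ (A.powerset.filter (Minimal (BlueAbove c X X0 Y0))).biUnion (ψ · A)

variable {c X X0 Y0} {ψ : Finset V → Finset V → Finset V}

theorem mem_glue {A : Finset V} {v : V} :
    v ∈ glue c X X0 Y0 ψ A ↔
      v ∈ A ∨ v ∈ Y0 ∨ ∃ B ⊆ A, Minimal (BlueAbove c X X0 Y0) B ∧ v ∈ ψ B A := by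
  simp only [glue, mem_union, mem_biUnion, mem_filter, mem_powerset, or_assoc, and_assoc]

theorem glue_eq_of_forall_not_minimal {A : Finset V}
    (hnone : ∀ B ⊆ A, ¬Minimal (BlueAbove c X X0 Y0) B) : glue c X X0 Y0 ψ A = A ∪ Y0 := by
  ext v
  simp only [mem_glue, mem_union]
  exact ⟨fun h => h.imp_right (·.resolve_right fun ⟨B, hBA, hB, _⟩ => hnone B hBA hB),
    fun h => h.imp_right Or.inl⟩

variable (hψ : ∀ B, BlueAbove c X X0 Y0 B → IsRedEmbedding c X B Y0 (ψ B))
include hψ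

theorem glue_inter_eq (hXY0 : Disjoint X Y0) {A : Finset V} (hAX : A ⊆ X) :
    glue c X X0 Y0 ψ A ∩ X = A := by
  ext v
  simp only [mem_inter, mem_glue]
  constructor
  · rintro ⟨hv | hv | ⟨B, hBA, hB, hv⟩, hvX⟩
    · exact hv
    · exact absurd hv (disjoint_left.mp hXY0 hvX)
    · rw [← (hψ B hB.prop).inter_eq A hBA hAX]
      exact mem_inter.mpr ⟨hv, hvX⟩
  · exact fun hv => ⟨Or.inl hv, hAX hv⟩

theorem glue_mono {A A' : Finset V} (hAA' : A ⊆ A') (hA'X : A' ⊆ X) :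
    glue c X X0 Y0 ψ A ⊆ glue c X X0 Y0 ψ A' := by
  intro v
  simp only [mem_glue]
  rintro (hv | hv | ⟨B, hBA, hB, hv⟩)
  · exact Or.inl (hAA' hv)
  · exact Or.inr (Or.inl hv)
  · exact Or.inr (Or.inr ⟨B, hBA.trans hAA', hB, (hψ B hB.prop).monotone hBA hAA' hA'X hv⟩)

theorem glue_eq_of_unique_minimal {A B : Finset V} (hAX : A ⊆ X) (hBA : B ⊆ A)
    (hB : Minimal (BlueAbove c X X0 Y0) B)
    (huniq : ∀ B' ⊆ A, Minimal (BlueAbove c X X0 Y0) B' → B' = B) :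
    glue c X X0 Y0 ψ A = ψ B A := by
  have hψB := hψ B hB.prop
  refine Subset.antisymm (fun v hv => ?_) fun v hv =>
    mem_glue.mpr (Or.inr (Or.inr ⟨B, hBA, hB, hv⟩))
  rcases mem_glue.mp hv with hv | hv | ⟨B', hB'A, hB', hv⟩
  · exact hψB.subset_apply hBA hAX hv
  · exact hψB.monotone subset_rfl hBA hAX (hψB.base (mem_union_right _ hv))
  · exact huniq B' hB'A hB' ▸ hv

theorem glue_red (hΛ : NoBlueLambda c) (hXY0 : Disjoint X Y0) (hred : c (X0 ∪ Y0) = false)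
    {A : Finset V} (hX0A : X0 ⊆ A) (hAX : A ⊆ X) : c (glue c X X0 Y0 ψ A) = false := by
  by_cases hnone : ∀ B ⊆ A, ¬Minimal (BlueAbove c X X0 Y0) B
  · rw [glue_eq_of_forall_not_minimal hnone]
    rcases hX0A.eq_or_ssubset with rfl | hX0A
    · exact hred
    · by_contra hblue
      obtain ⟨B, hBA, hB⟩ := exists_minimal_le_of_wellFoundedLT (BlueAbove c X X0 Y0) A
        ⟨hX0A, hAX, Bool.not_eq_false _ ▸ hblue⟩
      exact hnone B hBA hB
  push Not at hnone
  obtain ⟨B₁, hB₁A, hB₁⟩ := hnone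
  by_cases huniq : ∀ B ⊆ A, Minimal (BlueAbove c X X0 Y0) B → B = B₁
  · rw [glue_eq_of_unique_minimal hψ hAX hB₁A hB₁ huniq]
    exact (hψ B₁ hB₁.prop).red A hB₁A hAX
  push Not at huniq
  obtain ⟨B₂, hB₂A, hB₂, hne⟩ := huniq
  -- Distinct minimal elements are incomparable, and stay so after adding `Y0`, which misses `X`.
  have hincomp : ∀ {B B' : Finset V}, Minimal (BlueAbove c X X0 Y0) B →
      Minimal (BlueAbove c X X0 Y0) B' → B ≠ B' → ¬B ∪ Y0 ⊆ B' ∪ Y0 :=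
    fun hB hB' hne hsub => hne (hB'.eq_of_le hB.prop
      ((disjoint_of_subset_left hB.prop.2.1 hXY0).left_le_of_le_sup_right
        (subset_union_left.trans hsub)))
  have hsub : ∀ {B}, B ⊆ A → B ∪ Y0 ⊆ glue c X X0 Y0 ψ A := fun hBA v hv =>
    mem_glue.mpr ((mem_union.mp hv).imp (@hBA v) Or.inl)
  exact hΛ.eq_false_of_incomparable hB₁.prop.2.2 hB₂.prop.2.2 (hincomp hB₁ hB₂ hne.symm)
    (hincomp hB₂ hB₁ hne) (hsub hB₁A) (hsub hB₂A)

theorem isRedEmbedding_glue (hΛ : NoBlueLambda c) (hXY0 : Disjoint X Y0)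
    (hred : c (X0 ∪ Y0) = false) : IsRedEmbedding c X X0 Y0 (glue c X X0 Y0 ψ) where
  subset_iff A B _ hAX _ hBX := ⟨fun hAB => glue_mono hψ hAB hBX, fun h => by
    simpa only [glue_inter_eq hψ hXY0 hAX, glue_inter_eq hψ hXY0 hBX] using
      inter_subset_inter h (subset_refl X)⟩
  red A hA hAX := glue_red hψ hΛ hXY0 hred hA hAX
  inter_eq A _ hAX := glue_inter_eq hψ hXY0 hAX
  base := subset_union_left

end Gluing

theorem embeddable_of_red {c : Finset V → Bool} {X X0 Y0 : Finset V} (hΛ : NoBlueLambda c)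
    (hXY0 : Disjoint X Y0) (hred : c (X0 ∪ Y0) = false)
    (hall : ∀ X' ⊆ X, X0 ⊂ X' → Embeddable c X X' Y0) : Embeddable c X X0 Y0 := by
  have hψ : ∀ B, ∃ ψB, BlueAbove c X X0 Y0 B → IsRedEmbedding c X B Y0 ψB := fun B => by
    by_cases hB : BlueAbove c X X0 Y0 B
    · obtain ⟨ψB, hψB⟩ := embeddable_iff.mp (hall B hB.2.1 hB.1)
      exact ⟨ψB, fun _ => hψB⟩
    · exact ⟨id, fun h => absurd h hB⟩
  choose ψ hψ using hψ
  exact embeddable_iff.mpr ⟨_, isRedEmbedding_glue hψ hΛ hXY0 hred⟩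

end

/-- Let `X`, `Y` be disjoint sets and let `Q(X ∪ Y)` be blue/red colored with
no blue copy of `Λ`. For `X0 ⊆ X`, `Y0 ⊆ Y`, the vertex `(X0, Y0)` is embeddable iff either
(i) `(X0, Y0)` is blue and there is `Y' ⊆ Y` with `Y' ⊋ Y0` such that `(X0, Y')` is
embeddable, or (ii) `(X0, Y0)` is red and for all `X' ⊆ X` with `X' ⊋ X0` the vertex
`(X', Y0)` is embeddable. -/
theorem statement16 {V : Type*} [DecidableEq V] [Fintype V]
    (X Y : Finset V) (hd : Disjoint X Y) (hc : X ∪ Y = Finset.univ)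
    (c : Finset V → Bool) (hΛ : NoBlueLambda c)
    (X0 Y0 : Finset V) (hX0 : X0 ⊆ X) (hY0 : Y0 ⊆ Y) :
    Embeddable c X X0 Y0 ↔
      ((c (X0 ∪ Y0) = true ∧
          ∃ Y' : Finset V, Y' ⊆ Y ∧ Y0 ⊂ Y' ∧ Embeddable c X X0 Y') ∨
       (c (X0 ∪ Y0) = false ∧
          ∀ X' : Finset V, X' ⊆ X → X0 ⊂ X' → Embeddable c X X' Y0)) := by
  constructor
  · intro h
    cases hcol : c (X0 ∪ Y0)
    · exact Or.inr ⟨rfl, fun X' hX'X hX0X' => h.restrict hX0X'.subset hX'X⟩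
    · obtain ⟨Y', hY'Y, hY0Y', hY'red, hY'⟩ := h.exists_red_superset hc hX0 hY0
      refine Or.inl ⟨rfl, Y', hY'Y, ssubset_of_subset_of_ne hY0Y' ?_, hY'⟩
      rintro rfl
      exact Bool.noConfusion (hcol.symm.trans hY'red)
  · rintro (⟨-, Y', -, hY0Y', hY'⟩ | ⟨hred, hall⟩)
    · exact hY'.of_subset_right hY0Y'.subset
    · exact embeddable_of_red hΛ (hd.mono_right hY0) hred hall
end

section
/- Let X and Y be disjoint finite sets and let Q = Q(X∪Y) be a blue/red colored Boolean lattice with no blue copy of Λ. Let X0 ⊆ X and Y0 ⊆ Y be such that the vertex (X0, Y0) is not embeddable. Then there exists X' with X0 ⊆ X' ⊆ X such that the vertex (X', Y0) is blue and not embeddable. -/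
/-- Let `X`, `Y` be disjoint sets and let `Q(X ∪ Y)` be blue/red colored with
no blue copy of `Λ`. If `X0 ⊆ X`, `Y0 ⊆ Y` and the vertex `(X0, Y0)` is not embeddable,
then there is `X'` with `X0 ⊆ X' ⊆ X` such that `(X', Y0)` is blue and not embeddable. -/
theorem statement17 {V : Type*} [DecidableEq V] [Fintype V]
    (X Y : Finset V) (hd : Disjoint X Y) (hc : X ∪ Y = Finset.univ)
    (c : Finset V → Bool) (hΛ : NoBlueLambda c)
    (X0 Y0 : Finset V) (hX0 : X0 ⊆ X) (hY0 : Y0 ⊆ Y)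
    (hne : ¬ Embeddable c X X0 Y0) :
    ∃ X' : Finset V, X0 ⊆ X' ∧ X' ⊆ X ∧
      c (X' ∪ Y0) = true ∧ ¬ Embeddable c X X' Y0 := by
  classical
  by_contra hcon
  push_neg at hcon
  apply hne
  set T : Finset (Finset V) :=
    (X.powerset).filter (fun A => X0 ⊆ A ∧ c (A ∪ Y0) = true) with hTdef
  have hTmem : ∀ A : Finset V, A ∈ T ↔ A ⊆ X ∧ X0 ⊆ A ∧ c (A ∪ Y0) = true := by
    intro A
    simp [hTdef, Finset.mem_filter, Finset.mem_powerset]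
  set Ms : Finset (Finset V) := T.filter (fun A => ∀ A' ∈ T, A' ⊆ A → A' = A) with hMsdef
  have hMsmem : ∀ M, M ∈ Ms ↔ M ∈ T ∧ ∀ A' ∈ T, A' ⊆ M → A' = M := by
    intro M; simp [hMsdef, Finset.mem_filter]
  have hmin : ∀ A ∈ T, ∃ M ∈ Ms, M ⊆ A := by
    intro A hA
    obtain ⟨M, hMF, hMmin⟩ := Finset.exists_min_image (T.filter (· ⊆ A)) (fun B => B.card)
      ⟨A, Finset.mem_filter.2 ⟨hA, Finset.Subset.refl A⟩⟩
    rw [Finset.mem_filter] at hMF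
    refine ⟨M, (hMsmem M).2 ⟨hMF.1, ?_⟩, hMF.2⟩
    intro A' hA' hsub
    exact Finset.eq_of_subset_of_card_le hsub
      (hMmin A' (Finset.mem_filter.2 ⟨hA', hsub.trans hMF.2⟩))
  have hEmb : ∀ M : Finset V, ∃ φ : Finset V → Finset V, M ∈ Ms →
      ((∀ A B : Finset V, M ⊆ A → A ⊆ X → M ⊆ B → B ⊆ X → (A ⊆ B ↔ φ A ⊆ φ B)) ∧
       (∀ A : Finset V, M ⊆ A → A ⊆ X → c (φ A) = false) ∧
       (∀ A : Finset V, M ⊆ A → A ⊆ X → φ A ∩ X = A) ∧ M ∪ Y0 ⊆ φ M) := by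
    intro M
    by_cases hM : M ∈ Ms
    · obtain ⟨hMT, _⟩ := (hMsmem M).1 hM
      obtain ⟨hMX, hX0M, hcM⟩ := (hTmem M).1 hMT
      obtain ⟨φ, h1, h2, h3, h4⟩ := hcon M hX0M hMX hcM
      exact ⟨φ, fun _ => ⟨h1, h2, h3, h4⟩⟩
    · exact ⟨id, fun h => absurd h hM⟩
  choose ψ hψ using hEmb
  have hYX : ∀ {y : V}, y ∈ Y0 → y ∉ X := fun hy hx => (Finset.disjoint_left.1 hd) hx (hY0 hy)
  have hψsub : ∀ M B, M ∈ Ms → M ⊆ B → B ⊆ X → B ∪ Y0 ⊆ ψ M B := by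
    intro M B hM hMB hBX
    obtain ⟨ho, hc', htr, hYsub⟩ := hψ M hM
    have hMX : M ⊆ X := hMB.trans hBX
    have hB : B ⊆ ψ M B := by
      intro x hx
      have hx' : x ∈ ψ M B ∩ X := by rw [htr B hMB hBX]; exact hx
      exact (Finset.mem_inter.1 hx').1
    have hYp : Y0 ⊆ ψ M B := by
      have h1 : Y0 ⊆ ψ M M := (Finset.union_subset_iff.1 hYsub).2
      have h2 : ψ M M ⊆ ψ M B := (ho M B (Finset.Subset.refl M) hMX hMB hBX).1 hMB
      exact h1.trans h2
    exact Finset.union_subset hB hYp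
  set Φ : Finset V → Finset V :=
    fun B => B ∪ Y0 ∪ (Ms.filter (· ⊆ B)).sup (fun M => ψ M B) with hΦdef
  have htrace : ∀ B : Finset V, B ⊆ X → Φ B ∩ X = B := by
    intro B hBX
    apply Finset.Subset.antisymm
    · intro x hx
      rw [Finset.mem_inter] at hx
      obtain ⟨hx1, hx2⟩ := hx
      rw [hΦdef] at hx1
      simp only [Finset.mem_union, Finset.mem_sup, Finset.mem_filter] at hx1
      rcases hx1 with (hxB | hxY) | ⟨M, ⟨hMMs, hMB⟩, hxψ⟩
      · exact hxB
      · exact absurd hx2 (hYX hxY)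
      · have := (hψ M hMMs).2.2.1 B hMB hBX
        have : x ∈ ψ M B ∩ X := Finset.mem_inter.2 ⟨hxψ, hx2⟩
        rwa [(hψ M hMMs).2.2.1 B hMB hBX] at this
    · intro x hx
      exact Finset.mem_inter.2 ⟨Finset.mem_union.2 (Or.inl (Finset.mem_union.2 (Or.inl hx))), hBX hx⟩
  have hmono : ∀ A B : Finset V, A ⊆ X → B ⊆ X → A ⊆ B → Φ A ⊆ Φ B := by
    intro A B hAX hBX hAB
    rw [hΦdef]
    refine Finset.union_subset (Finset.union_subset ?_ ?_) ?_
    · exact hAB.trans ((Finset.subset_union_left).trans Finset.subset_union_left)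
    · exact (Finset.subset_union_right).trans Finset.subset_union_left
    · intro x hx
      rw [Finset.mem_sup] at hx
      obtain ⟨M, hM, hxM⟩ := hx
      rw [Finset.mem_filter] at hM
      obtain ⟨hMMs, hMA⟩ := hM
      have h1 : ψ M A ⊆ ψ M B :=
        ((hψ M hMMs).1 A B hMA hAX (hMA.trans hAB) hBX).1 hAB
      have h2 : ψ M B ⊆ (Ms.filter (· ⊆ B)).sup (fun M => ψ M B) :=
        Finset.le_sup (f := fun M => ψ M B) (Finset.mem_filter.2 ⟨hMMs, hMA.trans hAB⟩)
      exact Finset.subset_union_right (h2 (h1 hxM))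
  have hcol : ∀ B : Finset V, X0 ⊆ B → B ⊆ X → c (Φ B) = false := by
    intro B hX0B hBX
    rcases (Ms.filter (· ⊆ B)).eq_empty_or_nonempty with hs | ⟨M1, hM1⟩
    · have hΦB : Φ B = B ∪ Y0 := by
        rw [hΦdef]; simp [hs]
      rw [hΦB]
      by_contra hblue
      rw [Bool.not_eq_false] at hblue
      have hBT : B ∈ T := (hTmem B).2 ⟨hBX, hX0B, hblue⟩
      obtain ⟨M, hM, hMB⟩ := hmin B hBT
      have : M ∈ Ms.filter (· ⊆ B) := Finset.mem_filter.2 ⟨hM, hMB⟩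
      rw [hs] at this
      exact absurd this (Finset.notMem_empty M)
    · rw [Finset.mem_filter] at hM1
      obtain ⟨hM1Ms, hM1B⟩ := hM1
      by_cases hone : ∀ M' ∈ Ms.filter (· ⊆ B), M' = M1
      · have hsup : (Ms.filter (· ⊆ B)).sup (fun M => ψ M B) = ψ M1 B := by
          apply le_antisymm
          · exact Finset.sup_le fun M hM => by rw [hone M hM]
          · exact Finset.le_sup (f := fun M => ψ M B) (Finset.mem_filter.2 ⟨hM1Ms, hM1B⟩)
        have hΦB : Φ B = ψ M1 B := by
          rw [hΦdef]
          simp only []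
          rw [hsup]
          exact Finset.union_eq_right.2 (hψsub M1 B hM1Ms hM1B hBX)
        rw [hΦB]
        exact (hψ M1 hM1Ms).2.1 B hM1B hBX
      · push_neg at hone
        obtain ⟨M2, hM2, hM2ne⟩ := hone
        rw [Finset.mem_filter] at hM2
        obtain ⟨hM2Ms, hM2B⟩ := hM2
        obtain ⟨hM1T, hM1min⟩ := (hMsmem M1).1 hM1Ms
        obtain ⟨hM2T, hM2min⟩ := (hMsmem M2).1 hM2Ms
        obtain ⟨hM1X, _, hcM1⟩ := (hTmem M1).1 hM1T
        obtain ⟨hM2X, _, hcM2⟩ := (hTmem M2).1 hM2T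
        have hn12 : ¬ M1 ⊆ M2 := fun h => hM2ne (hM2min M1 hM1T h).symm
        have hn21 : ¬ M2 ⊆ M1 := fun h => hM2ne (hM1min M2 hM2T h)
        obtain ⟨a, haM1, haM2⟩ := Finset.not_subset.1 hn12
        obtain ⟨b, hbM2, hbM1⟩ := Finset.not_subset.1 hn21
        by_contra hblue
        rw [Bool.not_eq_false] at hblue
        apply hΛ
        have hsubΦ : ∀ M : Finset V, M ⊆ B → M ∪ Y0 ⊆ Φ B := by
          intro M hMB
          rw [hΦdef]
          exact (Finset.union_subset_union_left hMB).trans Finset.subset_union_left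
        have haX : a ∈ X := hM1X haM1
        have hbX : b ∈ X := hM2X hbM2
        refine ⟨M2 ∪ Y0, M1 ∪ Y0, Φ B, hcM2, hcM1, hblue, ?_, ?_, ?_, ?_⟩
        · rw [Finset.ssubset_iff_of_subset (hsubΦ M2 hM2B)]
          refine ⟨a, (hsubΦ M1 hM1B) (Finset.mem_union.2 (Or.inl haM1)), ?_⟩
          simp only [Finset.mem_union]
          rintro (h | h)
          · exact haM2 h
          · exact hYX h haX
        · rw [Finset.ssubset_iff_of_subset (hsubΦ M1 hM1B)]
          refine ⟨b, (hsubΦ M2 hM2B) (Finset.mem_union.2 (Or.inl hbM2)), ?_⟩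
          simp only [Finset.mem_union]
          rintro (h | h)
          · exact hbM1 h
          · exact hYX h hbX
        · intro h
          apply hbM1
          have := h (Finset.mem_union.2 (Or.inl hbM2))
          rcases Finset.mem_union.1 this with h' | h'
          · exact h'
          · exact absurd hbX (fun _ => hYX h' hbX)
        · intro h
          apply haM2
          have := h (Finset.mem_union.2 (Or.inl haM1))
          rcases Finset.mem_union.1 this with h' | h'
          · exact h'
          · exact absurd hbX (fun _ => hYX h' haX)
  refine ⟨Φ, ?_, hcol, fun A _ hAX => htrace A hAX, ?_⟩
  · intro A B hX0A hAX hX0B hBX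
    constructor
    · exact hmono A B hAX hBX
    · intro h
      calc A = Φ A ∩ X := (htrace A hAX).symm
        _ ⊆ Φ B ∩ X := Finset.inter_subset_inter h (Finset.Subset.refl X)
        _ = B := htrace B hBX
  · rw [hΦdef]
    exact Finset.subset_union_left
end
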